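/- arXiv:2603.08038 — 8 statements merged into one kernel-verified Lean document; each statement's English description precedes it below -/
import Mathlib

section
/- Let y ∈ ℤ and z ∈ ℕ with z ≥ 1, and let y₁ = y, z₁ = z, pᵢ = ⌊yᵢ / zᵢ⌋ (integer floor division), y_{i+1} = yᵢ − pᵢ, z_{i+1} = zᵢ − 1 for i = 1, …, z. Write q = ⌊y/z⌋ and r = y − q·z (so 0 ≤ r < z). Then for every i ∈ {1, …, z}: pᵢ = q if i ≤ z − r, and pᵢ = q + 1 if i > z − r; consequently ∑_{i=1}^{z} pᵢ = y. -/
/-- The running mass of the greedy balanced splitting procedure (0-indexed):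
`greedyY y z 0 = y` (this is `y₁`), and after producing the `(i+1)`-st piece
`pᵢ₊₁ = ⌊greedyY y z i / (z - i)⌋` (floor division, denominator `zᵢ₊₁ = z - i`),
the remaining mass is `greedyY y z (i+1) = greedyY y z i - pᵢ₊₁`. -/
def greedyY (y : ℤ) (z : ℕ) : ℕ → ℤ
  | 0 => y
  | i + 1 => greedyY y z i - (greedyY y z i).fdiv ((z : ℤ) - (i : ℤ))

/-- The `(i+1)`-st piece (0-indexed) produced by the greedy balanced splitting
procedure applied to `(y, z)`: `greedyP y z i = ⌊yᵢ₊₁ / zᵢ₊₁⌋` with `zᵢ₊₁ = z - i`. -/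
def greedyP (y : ℤ) (z : ℕ) (i : ℕ) : ℤ :=
  (greedyY y z i).fdiv ((z : ℤ) - (i : ℤ))

lemma fdiv_aux (q s d : ℤ) (hd : 0 < d) (h0 : 0 ≤ s) (h1 : s < d) :
    (q * d + s).fdiv d = q := by
  rw [Int.fdiv_eq_ediv_of_nonneg _ hd.le, add_comm, Int.add_mul_ediv_right _ _ hd.ne',
    Int.ediv_eq_zero_of_lt h0 h1, zero_add]

lemma fdiv_aux2 (q d : ℤ) (hd : 0 < d) : ((q + 1) * d).fdiv d = q + 1 := by
  rw [Int.fdiv_eq_ediv_of_nonneg _ hd.le, Int.mul_ediv_cancel _ hd.ne']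

lemma greedyY_formula (y q r : ℤ) (z : ℕ) (hy : y = q * z + r) (h0 : 0 ≤ r)
    (h1 : r ≤ (z : ℤ)) : ∀ i : ℕ, i ≤ z →
    greedyY y z i = q * ((z : ℤ) - i) + min r ((z : ℤ) - i) := by
  intro i
  induction i with
  | zero =>
    intro _
    simp [greedyY, hy, min_eq_left h1]
  | succ n ih =>
    intro h
    have hn : n ≤ z := by omega
    have hY := ih hn
    have hd : (0 : ℤ) < (z : ℤ) - n := by
      have : (n : ℤ) < z := by exact_mod_cast Nat.lt_of_succ_le h
      linarith
    show greedyY y z n - (greedyY y z n).fdiv ((z : ℤ) - n)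
        = q * ((z : ℤ) - (n + 1)) + min r ((z : ℤ) - (n + 1))
    rcases lt_or_ge r ((z : ℤ) - n) with hlt | hge
    · have hmin : min r ((z : ℤ) - n) = r := min_eq_left hlt.le
      rw [hY, hmin, fdiv_aux q r _ hd h0 hlt]
      rcases le_or_gt r ((z : ℤ) - (n + 1)) with h' | h'
      · rw [min_eq_left h']; push_cast; ring
      · -- r > z - (n+1) and r < z - n means r = z - n - ... impossible unless r = z-(n+1)+something
        have : r = (z : ℤ) - (n + 1) + 1 - 1 := by push_cast at h' hlt ⊢; omega
        rw [min_eq_right h'.le]; push_cast at h' hlt ⊢; nlinarith [h', hlt]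
    · have hmin : min r ((z : ℤ) - n) = (z : ℤ) - n := min_eq_right hge
      have hY' : greedyY y z n = (q + 1) * ((z : ℤ) - n) := by rw [hY, hmin]; ring
      rw [hY', fdiv_aux2 q _ hd]
      have : min r ((z : ℤ) - (n + 1)) = (z : ℤ) - (n + 1) := by
        apply min_eq_right; push_cast at hge ⊢; omega
      rw [this]; push_cast; ring

/-- with `q = ⌊y/z⌋` and `r = y - q·z`, every piece of the greedy
balanced splitting procedure satisfies `pᵢ = q` if `i ≤ z - r` and `pᵢ = q + 1`
if `i > z - r` (for `i ∈ {1, …, z}`, 1-indexed), and consequently `∑_{i=1}^{z} pᵢ = y`. -/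
theorem greedy_split_pieces_formula (y : ℤ) (z : ℕ) (hz : 1 ≤ z) :
    -- `p i` is the `i`-th piece, 1-indexed
    ∀ p : ℕ → ℤ, p = (fun i => greedyP y z (i - 1)) →
    ∀ q r : ℤ, q = y.fdiv (z : ℤ) → r = y - q * (z : ℤ) →
      (∀ i : ℕ, 1 ≤ i → i ≤ z →
        (((i : ℤ) ≤ (z : ℤ) - r → p i = q) ∧ ((z : ℤ) - r < (i : ℤ) → p i = q + 1))) ∧
      (∑ i ∈ Finset.Icc 1 z, p i) = y := by
  intro p hp q r hq hr
  have hzpos : (0 : ℤ) < (z : ℤ) := by exact_mod_cast hz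
  have hq' : q = y / (z : ℤ) := by rw [hq, Int.fdiv_eq_ediv_of_nonneg _ hzpos.le]
  have hy : y = q * z + r := by rw [hr]; ring
  have heq : y - y / (z : ℤ) * (z : ℤ) = y % (z : ℤ) := by
    rw [Int.emod_def]; ring
  have h0 : 0 ≤ r := by
    rw [hr, hq', heq]; exact Int.emod_nonneg y hzpos.ne'
  have h1 : r < (z : ℤ) := by
    rw [hr, hq', heq]; exact Int.emod_lt_of_pos y hzpos
  have hYf := greedyY_formula y q r z hy h0 h1.le
  have hpiece : ∀ i : ℕ, 1 ≤ i → i ≤ z →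
      (((i : ℤ) ≤ (z : ℤ) - r → p i = q) ∧ ((z : ℤ) - r < (i : ℤ) → p i = q + 1)) := by
    intro i hi1 hiz
    have hn : i - 1 ≤ z := by omega
    have hY := hYf (i - 1) hn
    have hcast : ((i - 1 : ℕ) : ℤ) = (i : ℤ) - 1 := by push_cast [hi1]; ring
    have hd : (0 : ℤ) < (z : ℤ) - ((i - 1 : ℕ) : ℤ) := by
      rw [hcast]; have : (i : ℤ) ≤ z := by exact_mod_cast hiz
      linarith
    have hpe : p i = (greedyY y z (i - 1)).fdiv ((z : ℤ) - ((i - 1 : ℕ) : ℤ)) := by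
      rw [hp]; rfl
    constructor
    · intro hle
      have hrlt : r < (z : ℤ) - ((i - 1 : ℕ) : ℤ) := by rw [hcast]; linarith
      rw [hpe, hY, min_eq_left hrlt.le, fdiv_aux q r _ hd h0 hrlt]
    · intro hgt
      have hrge : (z : ℤ) - ((i - 1 : ℕ) : ℤ) ≤ r := by rw [hcast]; linarith
      have : greedyY y z (i - 1) = (q + 1) * ((z : ℤ) - ((i - 1 : ℕ) : ℤ)) := by
        rw [hY, min_eq_right hrge]; ring
      rw [hpe, this, fdiv_aux2 q _ hd]
  refine ⟨hpiece, ?_⟩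
  have hYz : greedyY y z z = 0 := by
    have := hYf z le_rfl; simpa [min_eq_right h0] using this
  have hstep : ∀ i : ℕ, greedyP y z i = greedyY y z i - greedyY y z (i + 1) := by
    intro i; simp [greedyP, greedyY]
  calc ∑ i ∈ Finset.Icc 1 z, p i
      = ∑ i ∈ Finset.range z, greedyP y z i := by
        rw [hp, ← Finset.Ico_add_one_right_eq_Icc, Finset.sum_Ico_eq_sum_range]
        simp
    _ = ∑ i ∈ Finset.range z, (greedyY y z i - greedyY y z (i + 1)) := by
        exact Finset.sum_congr rfl fun i _ => hstep i
    _ = greedyY y z 0 - greedyY y z z := Finset.sum_range_sub' _ _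
    _ = y := by rw [hYz]; simp [greedyY]
end

section
/- Let y ∈ ℤ, z ∈ ℕ with z ≥ 1, and a ∈ ℤ satisfy a·z ≤ y ≤ (a+1)·z. Then every piece pᵢ (i = 1, …, z) produced by the greedy balanced splitting procedure applied to (y, z) satisfies a ≤ pᵢ ≤ a + 1. In particular, the interval of quantized values {a, a+1} is invariant under merging token values lying in {a, a+1} and re-splitting them by the greedy procedure. -/
lemma key (a Y m : ℤ) (hm : 0 < m) (h1 : a * m ≤ Y) (h2 : Y ≤ (a + 1) * m) :
    (a ≤ Y.fdiv m ∧ Y.fdiv m ≤ a + 1) ∧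
    (a * (m - 1) ≤ Y - Y.fdiv m ∧ Y - Y.fdiv m ≤ (a + 1) * (m - 1)) := by
  rw [Int.fdiv_eq_ediv_of_nonneg _ hm.le]
  have hq := Int.mul_ediv_add_emod Y m
  have h0 := Int.emod_nonneg Y hm.ne'
  have hlt := Int.emod_lt_of_pos Y hm
  have hla : a ≤ Y / m := (Int.le_ediv_iff_mul_le hm).2 h1
  have hub : Y / m ≤ a + 1 := by
    have := Int.ediv_le_ediv hm h2
    rwa [Int.mul_ediv_cancel _ hm.ne'] at this
  refine ⟨⟨hla, hub⟩, ?_, ?_⟩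
  · nlinarith [mul_le_mul_of_nonneg_left h1 (show (0:ℤ) ≤ m - 1 by omega)]
  · nlinarith

lemma greedyY_bounds (y : ℤ) (z : ℕ) (a : ℤ)
    (hlow : a * (z : ℤ) ≤ y) (hhigh : y ≤ (a + 1) * (z : ℤ)) :
    ∀ i, i ≤ z → a * ((z : ℤ) - (i : ℤ)) ≤ greedyY y z i ∧
      greedyY y z i ≤ (a + 1) * ((z : ℤ) - (i : ℤ)) := by
  intro i
  induction i with
  | zero => intro _; simpa [greedyY] using ⟨hlow, hhigh⟩
  | succ i ih =>
    intro hi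
    have hi' : i < z := by omega
    obtain ⟨hl, hh⟩ := ih hi'.le
    have hm : (0 : ℤ) < (z : ℤ) - (i : ℤ) := by
      have : (i : ℤ) < (z : ℤ) := by exact_mod_cast hi'
      omega
    have := (key a (greedyY y z i) ((z : ℤ) - (i : ℤ)) hm hl hh).2
    simp only [greedyY]
    push_cast
    constructor
    · calc a * ((z : ℤ) - ((i : ℤ) + 1)) = a * (((z : ℤ) - (i : ℤ)) - 1) := by ring
        _ ≤ _ := this.1
    · calc _ ≤ (a + 1) * (((z : ℤ) - (i : ℤ)) - 1) := this.2
        _ = (a + 1) * ((z : ℤ) - ((i : ℤ) + 1)) := by ring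

/-- if `a·z ≤ y ≤ (a+1)·z`, then every piece produced by the greedy
balanced splitting procedure applied to `(y, z)` lies in the interval `[a, a+1]`;
i.e., the set of quantized values `{a, a+1}` is invariant under merging token
values lying in `{a, a+1}` and re-splitting them by the greedy procedure. -/
theorem greedy_split_pieces_interval_invariant (y : ℤ) (z : ℕ) (hz : 1 ≤ z) (a : ℤ)
    (hlow : a * (z : ℤ) ≤ y) (hhigh : y ≤ (a + 1) * (z : ℤ)) :
    -- `p i` is the `i`-th piece, 1-indexed
    ∀ p : ℕ → ℤ, p = (fun i => greedyP y z (i - 1)) →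
      ∀ i ∈ Finset.Icc 1 z, a ≤ p i ∧ p i ≤ a + 1 := by
  intro p hp i hi
  subst hp
  rw [Finset.mem_Icc] at hi
  obtain ⟨h1, h2⟩ := hi
  obtain ⟨hl, hh⟩ := greedyY_bounds y z a hlow hhigh (i - 1) (by omega)
  have hm : (0 : ℤ) < (z : ℤ) - ((i - 1 : ℕ) : ℤ) := by
    have : ((i - 1 : ℕ) : ℤ) < (z : ℤ) := by exact_mod_cast (show i - 1 < z by omega)
    omega
  exact (key a (greedyY y z (i - 1)) _ hm hl hh).1
end

section
/- Let ι be a finite type, x : ι → ℤ, and let Vₖ, Vₖ₊₁ be finite subsets of ι with R = Vₖ ∩ Vₖ₊₁, D = Vₖ \ Vₖ₊₁, A = Vₖ₊₁ \ Vₖ. Let y : ι → ℤ satisfy ∑_{j∈Vₖ} y j = 2·∑_{j∈Vₖ} x j. Suppose there exist c : ι → ι → ℤ with ∑_{l∈R} c l j = y j for every j ∈ R (conservative redistribution among remaining nodes), and f : ι → ι with f j ∈ R for every j ∈ D (departure handoff targets). Define y' : ι → ℤ by y' l = ∑_{i∈R} c l i + ∑_{j∈D, f j = l} (y j − 2·x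 j) for l ∈ R, and y' l = 2·x l for l ∈ A. Then ∑_{l∈Vₖ₊₁} y' l = 2·∑_{l∈Vₖ₊₁} x l. -/
/-- one-step sum-preservation identity of algorithm QAOD.
`Vk`, `Vk1` are the active sets at steps `k`, `k+1`; `R = Vk ∩ Vk1` (remaining),
`D = Vk \ Vk1` (departing), `A = Vk1 \ Vk` (arriving). If the masses `y` satisfy
`∑_{Vk} y = 2·∑_{Vk} x`, remaining nodes redistribute conservatively via `c`,
each departing node `j` hands off `y j - 2·x j` to `f j ∈ R`, and arriving nodes
initialize to `2·x`, then `∑_{Vk1} y' = 2·∑_{Vk1} x`. -/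
theorem qaod_one_step_sum_preservation
    {ι : Type*} [Fintype ι] [DecidableEq ι]
    (x : ι → ℤ) (Vk Vk1 : Finset ι)
    (R D A : Finset ι) (hR : R = Vk ∩ Vk1) (hD : D = Vk \ Vk1) (hA : A = Vk1 \ Vk)
    (y : ι → ℤ) (hy : ∑ j ∈ Vk, y j = 2 * ∑ j ∈ Vk, x j)
    (c : ι → ι → ℤ) (hc : ∀ j ∈ R, ∑ l ∈ R, c l j = y j)
    (f : ι → ι) (hf : ∀ j ∈ D, f j ∈ R)
    (y' : ι → ℤ)
    (hy'R : ∀ l ∈ R,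
      y' l = ∑ i ∈ R, c l i + ∑ j ∈ D.filter (fun j => f j = l), (y j - 2 * x j))
    (hy'A : ∀ l ∈ A, y' l = 2 * x l) :
    ∑ l ∈ Vk1, y' l = 2 * ∑ l ∈ Vk1, x l := by
  have hsplit1 : ∀ g : ι → ℤ, ∑ l ∈ Vk1, g l = ∑ l ∈ R, g l + ∑ l ∈ A, g l := by
    intro g
    rw [hR, Finset.inter_comm, hA, Finset.sum_inter_add_sum_sdiff]
  have hsplitk : ∀ g : ι → ℤ, ∑ l ∈ Vk, g l = ∑ l ∈ R, g l + ∑ l ∈ D, g l := by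
    intro g
    rw [hR, hD, Finset.sum_inter_add_sum_sdiff]
  have hcc : ∑ l ∈ R, ∑ i ∈ R, c l i = ∑ i ∈ R, y i := by
    rw [Finset.sum_comm]
    exact Finset.sum_congr rfl hc
  have hfib : ∑ l ∈ R, ∑ j ∈ D.filter (fun j => f j = l), (y j - 2 * x j)
      = ∑ j ∈ D, (y j - 2 * x j) :=
    Finset.sum_fiberwise_of_maps_to hf _
  calc ∑ l ∈ Vk1, y' l = ∑ l ∈ R, y' l + ∑ l ∈ A, y' l := hsplit1 y'
    _ = (∑ i ∈ R, y i + ∑ j ∈ D, (y j - 2 * x j)) + ∑ l ∈ A, 2 * x l := by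
        rw [Finset.sum_congr rfl hy'R, Finset.sum_congr rfl hy'A,
          Finset.sum_add_distrib, hcc, hfib]
    _ = 2 * ∑ l ∈ Vk1, x l := by
        rw [Finset.sum_sub_distrib]
        have h1 := hsplitk y
        have h2 := hsplitk x
        have h3 := hsplit1 x
        rw [h1, h2] at hy
        rw [h3]
        simp only [← Finset.mul_sum]
        linarith [Finset.mul_sum D x 2, Finset.mul_sum A x 2]
end

section
/- Let ι be a finite type, x : ι → ℤ, V : ℕ → Finset ι a sequence of active-node sets and y : ℕ → ι → ℤ a sequence of mass assignments with y 0 j = 2·x j for every j ∈ V 0. Suppose that for every k, setting R = V k ∩ V (k+1), D = V k \ V (k+1), A = V (k+1) \ V k, there exist c : ι → ι → ℤ with ∑_{l∈R} c l j = y k j for every j ∈ R, and f : ι → ι with f j ∈ R for every j ∈ D, such that y (k+1) l = ∑_{i∈R} c l i + ∑_{j∈D, f j = l} (y k j − 2·x j) for l ∈ R and y (k+1) l = 2·x l for l ∈ A. Then for every k, ∑_{j∈V k} y k j = 2·∑_{j∈V k} x j. -/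
/-- the global sum-preservation invariant of algorithm QAOD.
`V k` is the active set at step `k`, masses are initialized as `y 0 j = 2·x j`
on `V 0`, and at every step remaining nodes (`R = V k ∩ V (k+1)`) redistribute
conservatively, departing nodes (`D = V k \ V (k+1)`) hand off `y k j - 2·x j`
to a remaining node, and arriving nodes (`A = V (k+1) \ V k`) initialize to `2·x`.
Then for every `k`, `∑_{V k} y k = 2·∑_{V k} x`. -/
theorem qaod_global_sum_preservation
    {ι : Type*} [Fintype ι] [DecidableEq ι]
    (x : ι → ℤ) (V : ℕ → Finset ι) (y : ℕ → ι → ℤ)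
    (hy0 : ∀ j ∈ V 0, y 0 j = 2 * x j)
    (hstep : ∀ k : ℕ,
      ∃ (c : ι → ι → ℤ) (f : ι → ι),
        (∀ j ∈ V k ∩ V (k + 1), ∑ l ∈ V k ∩ V (k + 1), c l j = y k j) ∧
        (∀ j ∈ V k \ V (k + 1), f j ∈ V k ∩ V (k + 1)) ∧
        (∀ l ∈ V k ∩ V (k + 1),
          y (k + 1) l = ∑ i ∈ V k ∩ V (k + 1), c l i +
            ∑ j ∈ (V k \ V (k + 1)).filter (fun j => f j = l), (y k j - 2 * x j)) ∧
        (∀ l ∈ V (k + 1) \ V k, y (k + 1) l = 2 * x l)) :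
    ∀ k : ℕ, ∑ j ∈ V k, y k j = 2 * ∑ j ∈ V k, x j := by
  intro k
  induction k with
  | zero =>
    rw [Finset.sum_congr rfl hy0, ← Finset.mul_sum]
  | succ k ih =>
    obtain ⟨c, f, h1, h2, h3, h4⟩ := hstep k
    set R := V k ∩ V (k + 1) with hR
    set D := V k \ V (k + 1) with hD
    set A := V (k + 1) \ V k with hA
    have hsplit1 : V (k + 1) = R ∪ A := by
      rw [hR, hA]; ext a; simp [Finset.mem_inter, Finset.mem_sdiff]; tauto
    have hdisj1 : Disjoint R A := by
      rw [hR, hA]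
      exact Finset.disjoint_sdiff.mono_left Finset.inter_subset_left
    have hsplit2 : V k = R ∪ D := by
      rw [hR, hD]; ext a; simp [Finset.mem_inter, Finset.mem_sdiff]; tauto
    have hdisj2 : Disjoint R D := by
      rw [hR, hD]
      exact Finset.disjoint_sdiff.mono_left Finset.inter_subset_right
    have hRsum : ∑ l ∈ R, y (k + 1) l
        = ∑ i ∈ R, y k i + ∑ j ∈ D, (y k j - 2 * x j) := by
      rw [Finset.sum_congr rfl h3, Finset.sum_add_distrib]
      congr 1
      · rw [Finset.sum_comm]
        exact Finset.sum_congr rfl h1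
      · exact Finset.sum_fiberwise_of_maps_to h2 _
    have hAsum : ∑ l ∈ A, y (k + 1) l = 2 * ∑ l ∈ A, x l := by
      rw [Finset.sum_congr rfl h4, ← Finset.mul_sum]
    have hk : ∑ j ∈ R, y k j + ∑ j ∈ D, y k j = 2 * (∑ j ∈ R, x j + ∑ j ∈ D, x j) := by
      rw [← Finset.sum_union hdisj2, ← Finset.sum_union hdisj2, ← hsplit2]
      exact ih
    rw [hsplit1, Finset.sum_union hdisj1, Finset.sum_union hdisj1, hRsum, hAsum,
      Finset.sum_sub_distrib, ← Finset.mul_sum]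
    linarith
end

section
/- Let ι be a finite type, x : ι → ℤ, and let V be a finite subset of ι partitioned into pairwise disjoint sets R' (long-term remaining), S (departing soon), and D (departing). Let A be a finite subset of ι disjoint from V (arriving), and set V' = R' ∪ S ∪ A. Let y : ι → ℤ satisfy ∑_{j∈V} y j = 2·∑_{j∈V} x j. Suppose there exist c : ι → ι → ℤ with ∑_{l∈R'} c l j = y j for every j ∈ R', and f : ι → ι with f j ∈ R' for every j ∈ D. Define y' : ι → ℤ by y' l = ∑_{i∈R'} c l i + ∑_{j∈D, f j = l} (y j − 2·x j) for l ∈ R', y' l = y l for l ∈ S, and y' l = 2·x l for l ∈ A. Then ∑_{l∈V'} y' l = 2·∑_{l∈V'} x l. -/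
/-- one-step sum-preservation identity of algorithm QAPOD.
The active set `V` is partitioned into pairwise disjoint sets `R'` (long-term
remaining), `S` (departing soon, frozen masses), and `D` (departing); `A` is the
set of arriving nodes (disjoint from `V`) and `V' = R' ∪ S ∪ A` is the next active
set. If `∑_V y = 2·∑_V x`, long-term remaining nodes redistribute conservatively
via `c`, departing nodes hand off `y j - 2·x j` to `f j ∈ R'`, departing-soon
nodes keep their masses, and arrivals initialize to `2·x`, then
`∑_{V'} y' = 2·∑_{V'} x`. -/
theorem qapod_one_step_sum_preservation
    {ι : Type*} [Fintype ι] [DecidableEq ι]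
    (x : ι → ℤ) (V R' S D A V' : Finset ι)
    (hpart : V = R' ∪ S ∪ D)
    (hRS : Disjoint R' S) (hRD : Disjoint R' D) (hSD : Disjoint S D)
    (hAV : Disjoint A V) (hV' : V' = R' ∪ S ∪ A)
    (y : ι → ℤ) (hy : ∑ j ∈ V, y j = 2 * ∑ j ∈ V, x j)
    (c : ι → ι → ℤ) (hc : ∀ j ∈ R', ∑ l ∈ R', c l j = y j)
    (f : ι → ι) (hf : ∀ j ∈ D, f j ∈ R')
    (y' : ι → ℤ)
    (hy'R : ∀ l ∈ R',
      y' l = ∑ i ∈ R', c l i + ∑ j ∈ D.filter (fun j => f j = l), (y j - 2 * x j))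
    (hy'S : ∀ l ∈ S, y' l = y l)
    (hy'A : ∀ l ∈ A, y' l = 2 * x l) :
    ∑ l ∈ V', y' l = 2 * ∑ l ∈ V', x l := by
  have hRA : Disjoint R' A := by
    refine Disjoint.mono_left ?_ hAV.symm
    simp [hpart, Finset.subset_union_left, Finset.union_assoc]
  have hSA : Disjoint S A := by
    refine Disjoint.mono_left ?_ hAV.symm
    rw [hpart]
    exact (Finset.subset_union_left.trans Finset.subset_union_left :
      S ⊆ (S ∪ R') ∪ D).trans (by rw [Finset.union_comm S R'])
  have hRSA : Disjoint (R' ∪ S) A := Finset.disjoint_union_left.2 ⟨hRA, hSA⟩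
  have hRSD : Disjoint (R' ∪ S) D := Finset.disjoint_union_left.2 ⟨hRD, hSD⟩
  have hsplit : ∀ g : ι → ℤ, ∑ l ∈ V', g l = ∑ l ∈ R', g l + ∑ l ∈ S, g l + ∑ l ∈ A, g l := by
    intro g
    rw [hV', Finset.sum_union hRSA, Finset.sum_union hRS]
  have hVsplit : ∀ g : ι → ℤ, ∑ l ∈ V, g l = ∑ l ∈ R', g l + ∑ l ∈ S, g l + ∑ l ∈ D, g l := by
    intro g
    rw [hpart, Finset.sum_union hRSD, Finset.sum_union hRS]
  have hfib : ∑ l ∈ R', ∑ j ∈ D.filter (fun j => f j = l), (y j - 2 * x j)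
      = ∑ j ∈ D, (y j - 2 * x j) := Finset.sum_fiberwise_of_maps_to hf _
  have hyR : ∑ l ∈ R', y' l = ∑ j ∈ R', y j + ∑ j ∈ D, (y j - 2 * x j) := by
    rw [Finset.sum_congr rfl hy'R, Finset.sum_add_distrib, hfib,
      Finset.sum_comm, Finset.sum_congr rfl hc]
  rw [hsplit, hsplit, hyR, Finset.sum_congr rfl hy'S, Finset.sum_congr rfl hy'A]
  have := hy
  rw [hVsplit y, hVsplit x] at this
  rw [Finset.sum_sub_distrib] at *
  simp only [← Finset.mul_sum] at *
  linarith [this]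
end

section
/- Let ι be a finite type, x : ι → ℤ, H a finite subset of ι (nodes active at least once so far) and V ⊆ H (currently active nodes) with ∑_{j∈V} y j = 2·∑_{j∈H} x j for a given y : ι → ℤ. Let R ⊆ V, D = V \ R, and let A be a finite subset of ι disjoint from V, split as A₁ = A \ H (first-time arrivals) and A₂ = A ∩ H (returning arrivals). Suppose there exist c : ι → ι → ℤ with ∑_{l∈R} c l j = y j for every j ∈ R, and f : ι → ι with f j ∈ R for every j ∈ D. Define y' : ι → ℤ by y' l = ∑_{i∈R} c l i + ∑_{j∈D, f j = l} y j for l ∈ R, y' l = 2·x l for l ∈ A₁, and y' l = 0 for l ∈ A₂. Then, with V' = R ∪ A and H' = H ∪ A, ∑_{l∈V'} y' l = 2·∑_{l∈H'} x l. -/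
/-- one-step invariant of algorithm QAIOD (indefinitely open system).
`H` is the set of nodes active at least once so far, `V ⊆ H` the currently active
nodes, with `∑_V y = 2·∑_H x`. Remaining nodes `R ⊆ V` redistribute conservatively
via `c`; departing nodes `D = V \ R` hand off their full stored mass `y j` to
`f j ∈ R`; arriving nodes `A` (disjoint from `V`) split into first-time arrivals
`A₁ = A \ H` (initializing to `2·x`) and returning arrivals `A₂ = A ∩ H`
(initializing to `0`). With `V' = R ∪ A` and `H' = H ∪ A`,
`∑_{V'} y' = 2·∑_{H'} x`. -/
theorem qaiod_one_step_invariant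
    {ι : Type*} [Fintype ι] [DecidableEq ι]
    (x : ι → ℤ) (H V R D A A₁ A₂ V' H' : Finset ι)
    (hVH : V ⊆ H) (hRV : R ⊆ V) (hD : D = V \ R)
    (hAV : Disjoint A V) (hA₁ : A₁ = A \ H) (hA₂ : A₂ = A ∩ H)
    (hV' : V' = R ∪ A) (hH' : H' = H ∪ A)
    (y : ι → ℤ) (hy : ∑ j ∈ V, y j = 2 * ∑ j ∈ H, x j)
    (c : ι → ι → ℤ) (hc : ∀ j ∈ R, ∑ l ∈ R, c l j = y j)
    (f : ι → ι) (hf : ∀ j ∈ D, f j ∈ R)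
    (y' : ι → ℤ)
    (hy'R : ∀ l ∈ R, y' l = ∑ i ∈ R, c l i + ∑ j ∈ D.filter (fun j => f j = l), y j)
    (hy'A₁ : ∀ l ∈ A₁, y' l = 2 * x l)
    (hy'A₂ : ∀ l ∈ A₂, y' l = 0) :
    ∑ l ∈ V', y' l = 2 * ∑ l ∈ H', x l := by
  have hRA : Disjoint R A := (hAV.mono_right hRV).symm
  have hsumR : ∑ l ∈ R, y' l = 2 * ∑ j ∈ H, x j := by
    calc ∑ l ∈ R, y' l
        = ∑ l ∈ R, (∑ i ∈ R, c l i + ∑ j ∈ D.filter (fun j => f j = l), y j) :=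
          Finset.sum_congr rfl hy'R
      _ = ∑ l ∈ R, ∑ i ∈ R, c l i + ∑ l ∈ R, ∑ j ∈ D.filter (fun j => f j = l), y j :=
          Finset.sum_add_distrib
      _ = ∑ i ∈ R, y i + ∑ j ∈ D, y j := by
          congr 1
          · rw [Finset.sum_comm]; exact Finset.sum_congr rfl hc
          · rw [← Finset.sum_fiberwise_of_maps_to hf]
      _ = ∑ j ∈ V, y j := by
          rw [hD, ← Finset.sum_union (Finset.disjoint_sdiff),
            Finset.union_sdiff_of_subset hRV]
      _ = 2 * ∑ j ∈ H, x j := hy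
  have hA : A = A₁ ∪ A₂ := by rw [hA₁, hA₂, Finset.sdiff_union_inter]
  have hA₁₂ : Disjoint A₁ A₂ := by
    rw [hA₁, hA₂]; exact Finset.sdiff_disjoint.mono_right Finset.inter_subset_right
  have hsumA : ∑ l ∈ A, y' l = 2 * ∑ l ∈ A₁, x l := by
    rw [hA, Finset.sum_union hA₁₂, Finset.sum_congr rfl hy'A₁,
      Finset.sum_congr rfl hy'A₂, Finset.sum_const_zero, add_zero, Finset.mul_sum]
  have hAH : Disjoint A₁ H := by rw [hA₁]; exact Finset.sdiff_disjoint
  have hHA : H' = H ∪ A₁ := by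
    rw [hH', hA₁]
    rw [Finset.union_sdiff_self_eq_union]
  rw [hV', Finset.sum_union hRA, hsumR, hsumA, hHA,
    Finset.sum_union hAH.symm, mul_add]
end

section
/- Let ι be a finite type, x : ι → ℤ, V : ℕ → Finset ι, and define H k = ⋃_{t=0}^{k} V t. Let y : ℕ → ι → ℤ satisfy y 0 j = 2·x j for every j ∈ V 0. Suppose that for every k, setting R = V k ∩ V (k+1), D = V k \ V (k+1), A = V (k+1) \ V k, A₁ = A \ H k, A₂ = A ∩ H k, there exist c : ι → ι → ℤ with ∑_{l∈R} c l j = y k j for every j ∈ R, and f : ι → ι with f j ∈ R for every j ∈ D, such that y (k+1) l = ∑_{i∈R} c l i + ∑_{j∈D, f j = l} y k j for l ∈ R, y (k+1) l = 2·x l for l ∈ A₁, and y (k+1) l = 0 for l ∈ A₂. Then for every k, ∑_{j∈V k} y k j = 2·∑_{j∈H k} x j. -/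
/-- the global invariant of algorithm QAIOD.
`V k` is the active set at step `k` and `H k = ⋃_{t=0}^{k} V t` the set of nodes
active at least once up to time `k`. Masses are initialized as `y 0 j = 2·x j` on
`V 0`; at every step, remaining nodes redistribute conservatively, departing nodes
hand off their full stored mass to a remaining node, first-time arrivals initialize
to `2·x`, and returning arrivals initialize to `0`. Then for every `k`,
`∑_{V k} y k = 2·∑_{H k} x`. -/
theorem qaiod_global_invariant
    {ι : Type*} [Fintype ι] [DecidableEq ι]
    (x : ι → ℤ) (V : ℕ → Finset ι) (y : ℕ → ι → ℤ)
    (H : ℕ → Finset ι) (hH : ∀ k, H k = (Finset.range (k + 1)).biUnion V)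
    (hy0 : ∀ j ∈ V 0, y 0 j = 2 * x j)
    (hstep : ∀ k : ℕ,
      ∃ (c : ι → ι → ℤ) (f : ι → ι),
        (∀ j ∈ V k ∩ V (k + 1), ∑ l ∈ V k ∩ V (k + 1), c l j = y k j) ∧
        (∀ j ∈ V k \ V (k + 1), f j ∈ V k ∩ V (k + 1)) ∧
        (∀ l ∈ V k ∩ V (k + 1),
          y (k + 1) l = ∑ i ∈ V k ∩ V (k + 1), c l i +
            ∑ j ∈ (V k \ V (k + 1)).filter (fun j => f j = l), y k j) ∧
        (∀ l ∈ (V (k + 1) \ V k) \ H k, y (k + 1) l = 2 * x l) ∧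
        (∀ l ∈ (V (k + 1) \ V k) ∩ H k, y (k + 1) l = 0)) :
    ∀ k : ℕ, ∑ j ∈ V k, y k j = 2 * ∑ j ∈ H k, x j := by
  intro k
  induction k with
  | zero =>
    rw [hH 0]
    rw [show (0:ℕ)+1 = 1 from rfl, Finset.range_one, Finset.singleton_biUnion, Finset.mul_sum]
    exact Finset.sum_congr rfl hy0
  | succ k ih =>
    obtain ⟨c, f, hc, hf, hR, hA1, hA2⟩ := hstep k
    have hVkH : V k ⊆ H k := by
      rw [hH]
      intro j hj
      exact Finset.mem_biUnion.2 ⟨k, Finset.mem_range.2 (Nat.lt_succ_self k), hj⟩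
    -- split active set at k+1 into remaining and arrivals
    have hsplit : ∑ j ∈ V (k+1), y (k+1) j
        = ∑ j ∈ V k ∩ V (k+1), y (k+1) j + ∑ j ∈ V (k+1) \ V k, y (k+1) j := by
      rw [Finset.inter_comm]
      exact (Finset.sum_inter_add_sum_sdiff _ _ _).symm
    -- remaining part equals total mass at time k
    have hRsum : ∑ j ∈ V k ∩ V (k+1), y (k+1) j = ∑ j ∈ V k, y k j := by
      rw [Finset.sum_congr rfl hR, Finset.sum_add_distrib]
      rw [Finset.sum_comm, Finset.sum_congr rfl hc,
        Finset.sum_fiberwise_of_maps_to hf]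
      exact Finset.sum_inter_add_sum_sdiff _ _ _
    -- arrivals part
    have hAsum : ∑ j ∈ V (k+1) \ V k, y (k+1) j
        = ∑ j ∈ (V (k+1) \ V k) \ H k, 2 * x j := by
      rw [← Finset.sum_inter_add_sum_sdiff (V (k+1) \ V k) (H k) (y (k+1))]
      rw [Finset.sum_congr rfl hA2, Finset.sum_const, smul_zero, zero_add]
      exact Finset.sum_congr rfl hA1
    -- describe H (k+1)
    have hHsucc : H (k+1) = H k ∪ V (k+1) := by
      rw [hH (k+1), Finset.range_add_one, Finset.biUnion_insert, ← hH k,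
        Finset.union_comm]
    have hHdiff : V (k+1) \ H k = (V (k+1) \ V k) \ H k := by
      ext j
      simp only [Finset.mem_sdiff]
      constructor
      · rintro ⟨hj1, hj2⟩
        exact ⟨⟨hj1, fun hk => hj2 (hVkH hk)⟩, hj2⟩
      · rintro ⟨⟨hj1, _⟩, hj2⟩
        exact ⟨hj1, hj2⟩
    have hHsum : ∑ j ∈ H (k+1), x j = ∑ j ∈ H k, x j + ∑ j ∈ (V (k+1) \ V k) \ H k, x j := by
      rw [hHsucc, ← hHdiff]
      rw [Finset.union_comm, ← Finset.sum_inter_add_sum_sdiff (V (k+1) ∪ H k) (H k) x]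
      congr 1
      · congr 1
        ext j
        simp only [Finset.mem_inter, Finset.mem_union]
        exact ⟨fun h => h.2, fun h => ⟨Or.inr h, h⟩⟩
      · congr 1
        ext j
        simp only [Finset.mem_sdiff, Finset.mem_union]
        tauto
    rw [hsplit, hRsum, hAsum, ih, hHsum, mul_add, Finset.mul_sum, Finset.mul_sum]
end

section
/- Let V be a finite type with n = card V ≥ 1, let T ≥ 1, and let E : ℕ → V → V → Prop be a time-indexed edge relation such that for every k the window-union relation U_k a b := (∃ t, k ≤ t ∧ t < k + T ∧ E t a b) is strongly connected (for all a, b, Relation.ReflTransGen (U_k) a b). Then for all vertices u, v ∈ V and every start time k₀ ∈ ℕ, there exists a walk w : ℕ → V with w k₀ = u, w (k₀ + (n−1)·T) = v, and for every t with k₀ ≤ t < k₀ + (n−1)·T, either w (t+1) = w t (waiting) or E t (w t) (w (t+1)) (moving along an edge available at time t). In particular, information from any node reaches any other node within (n−1)·T time steps. -/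
/-!
Fix the start `(k₀, u)` and let `R s` be the set of vertices reachable by time `s`. Waiting makes
`R` monotone in `s`. If some vertex `b` is missing from `R s`, a path from `u` to `b` in the union of
the edges over the window `[s, s + T)` leaves `R s` along some edge `E t x y`; a walk can wait at `x`
until time `t` and then take it, so `R (s + T)` gains `y`. Hence `R` grows by at least one vertex
per window until it is everything, and `n - 1` windows suffice.
-/

def windowUnion {V : Type*} (E : ℕ → V → V → Prop) (k T : ℕ) (a b : V) : Prop :=
  ∃ t, k ≤ t ∧ t < k + T ∧ E t a b

def TimeRespectingReach {V : Type*} (E : ℕ → V → V → Prop) (k₀ : ℕ) (u : V) (s : ℕ) (x : V) :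
    Prop :=
  ∃ w : ℕ → V, w k₀ = u ∧ w s = x ∧
    ∀ t, k₀ ≤ t → t < s → w (t + 1) = w t ∨ E t (w t) (w (t + 1))

namespace TimeRespectingReach

variable {V : Type*} {E : ℕ → V → V → Prop} {k₀ s t : ℕ} {u a b : V}

theorem refl : TimeRespectingReach E k₀ u k₀ u :=
  ⟨fun _ => u, rfl, rfl, fun _ ht ht' => absurd ht' (Nat.not_lt.2 ht)⟩

theorem snoc (hs : k₀ ≤ s) (h : TimeRespectingReach E k₀ u s a) (hab : b = a ∨ E s a b) :
    TimeRespectingReach E k₀ u (s + 1) b := by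
  obtain ⟨w, hw₀, hws, hstep⟩ := h
  refine ⟨Function.update w (s + 1) b, by simp [show k₀ ≠ s + 1 by omega, hw₀], by simp, ?_⟩
  intro t ht hts
  rcases Nat.lt_succ_iff_lt_or_eq.1 hts with hlt | rfl
  · rw [Function.update_of_ne (by omega), Function.update_of_ne (by omega)]
    exact hstep t ht hlt
  · simpa [hws] using hab

theorem mono (hs : k₀ ≤ s) (hst : s ≤ t) (h : TimeRespectingReach E k₀ u s a) :
    TimeRespectingReach E k₀ u t a := by
  induction hst with
  | refl => exact h
  | step hst ih => exact snoc (hs.trans hst) ih (Or.inl rfl)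

theorem of_edge (hs : k₀ ≤ s) (hst : s ≤ t) (h : TimeRespectingReach E k₀ u s a)
    (he : E t a b) : TimeRespectingReach E k₀ u (t + 1) b :=
  snoc (hs.trans hst) (mono hs hst h) (Or.inr he)

end TimeRespectingReach

theorem Relation.ReflTransGen.exists_edge_mem_notMem {V : Type*} {r : V → V → Prop} {S : Set V}
    {a b : V} (h : Relation.ReflTransGen r a b) (ha : a ∈ S) (hb : b ∉ S) :
    ∃ x ∈ S, ∃ y ∉ S, r x y := by
  induction h using Relation.ReflTransGen.head_induction_on with
  | refl => exact absurd ha hb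
  | @head a c hac _ ih =>
    by_cases hc : c ∈ S
    · exact ih hc
    · exact ⟨a, ha, c, hc, hac⟩

section Growth

open TimeRespectingReach

variable {V : Type*} [Finite V] {E : ℕ → V → V → Prop} {k₀ : ℕ} {u : V} {T : ℕ}

theorem ncard_timeRespectingReach_lt_of_window {s : ℕ} {b : V}
    (hSC : ∀ a b, Relation.ReflTransGen (windowUnion E s T) a b) (hs : k₀ ≤ s)
    (hb : ¬ TimeRespectingReach E k₀ u s b) :
    {x | TimeRespectingReach E k₀ u s x}.ncard <
      {x | TimeRespectingReach E k₀ u (s + T) x}.ncard := by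
  obtain ⟨x, hx, y, hy, t, hst, htT, he⟩ :=
    (hSC u b).exists_edge_mem_notMem (S := {x | TimeRespectingReach E k₀ u s x})
      (mono le_rfl hs refl) hb
  have hy' : TimeRespectingReach E k₀ u (s + T) y := mono (by omega) htT (of_edge hs hst hx he)
  exact Set.ncard_lt_ncard ⟨fun z hz => mono hs (Nat.le_add_right s T) hz, fun hsub => hy (hsub hy')⟩

theorem min_le_ncard_timeRespectingReach
    (hSC : ∀ k a b, Relation.ReflTransGen (windowUnion E k T) a b) (m : ℕ) :
    min (m + 1) (Nat.card V) ≤ {x | TimeRespectingReach E k₀ u (k₀ + m * T) x}.ncard := by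
  induction m with
  | zero =>
    have hu : u ∈ {x | TimeRespectingReach E k₀ u (k₀ + 0 * T) x} := by simpa using refl
    have := (Set.ncard_pos (Set.toFinite _)).2 ⟨u, hu⟩
    omega
  | succ m ih =>
    have hnext : k₀ + (m + 1) * T = k₀ + m * T + T := by ring
    rw [hnext]
    by_cases hall : ∀ b, TimeRespectingReach E k₀ u (k₀ + m * T) b
    · have huniv : {x | TimeRespectingReach E k₀ u (k₀ + m * T + T) x} = Set.univ :=
        Set.eq_univ_of_forall fun b => mono (by omega) (Nat.le_add_right _ _) (hall b)
      simp [huniv]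
    · obtain ⟨b, hb⟩ := not_forall.1 hall
      have := ncard_timeRespectingReach_lt_of_window (hSC _) (Nat.le_add_right _ _) hb
      omega

end Growth

theorem jointly_strongly_connected_time_respecting_walk_general
    {V : Type*} [Fintype V] (n : ℕ) (hn : n = Fintype.card V)
    (T : ℕ) (E : ℕ → V → V → Prop)
    (hSC : ∀ k : ℕ, ∀ a b : V,
      Relation.ReflTransGen (fun a b => ∃ t, k ≤ t ∧ t < k + T ∧ E t a b) a b) :
    ∀ u v : V, ∀ k₀ : ℕ,
      ∃ w : ℕ → V, w k₀ = u ∧ w (k₀ + (n - 1) * T) = v ∧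
        ∀ t : ℕ, k₀ ≤ t → t < k₀ + (n - 1) * T →
          w (t + 1) = w t ∨ E t (w t) (w (t + 1)) := by
  intro u v k₀
  have hcard := min_le_ncard_timeRespectingReach (E := E) (k₀ := k₀) (u := u) hSC (n - 1)
  have huniv : {x | TimeRespectingReach E k₀ u (k₀ + (n - 1) * T) x} = Set.univ := by
    by_contra hne
    have := Set.ncard_lt_card hne
    rw [Nat.card_eq_fintype_card, ← hn] at this hcard
    omega
  exact Set.eq_univ_iff_forall.1 huniv v

/-- finite-time information propagation under T-joint strong
connectivity. Let `V` be a finite type with `n = card V ≥ 1` and suppose that for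
every `k` the union of the edge relations over the window `{k, …, k+T-1}` is
strongly connected. Then from any vertex `u` at any start time `k₀` there is a
time-respecting walk with waiting that reaches any vertex `v` by time
`k₀ + (n-1)·T`: at each intermediate time `t` the walk either waits
(`w (t+1) = w t`) or moves along an edge available at time `t`. -/
theorem jointly_strongly_connected_time_respecting_walk
    {V : Type*} [Fintype V] (n : ℕ) (hn : n = Fintype.card V) (hn1 : 1 ≤ n)
    (T : ℕ) (hT : 1 ≤ T) (E : ℕ → V → V → Prop)
    (hSC : ∀ k : ℕ, ∀ a b : V,
      Relation.ReflTransGen (fun a b => ∃ t, k ≤ t ∧ t < k + T ∧ E t a b) a b) :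
    ∀ u v : V, ∀ k₀ : ℕ,
      ∃ w : ℕ → V, w k₀ = u ∧ w (k₀ + (n - 1) * T) = v ∧
        ∀ t : ℕ, k₀ ≤ t → t < k₀ + (n - 1) * T →
          w (t + 1) = w t ∨ E t (w t) (w (t + 1)) :=
  jointly_strongly_connected_time_respecting_walk_general n hn T E hSC
end
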